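/- arXiv:2604.21809 — 6 statements merged into one kernel-verified Lean document; each statement's English description precedes it below -/
import Mathlib

section
/- Let x⁽¹⁾, …, x⁽ᴺ⁾ ∈ ℝ³ and K := Σₙ ‖x⁽ⁿ⁾‖² I − Σₙ x⁽ⁿ⁾(x⁽ⁿ⁾)ᵀ. If the points x⁽¹⁾, …, x⁽ᴺ⁾ span a linear subspace of ℝ³ of dimension at least 2, then K is positive definite (equivalently, K is invertible). -/
open Matrix

private lemma vecMulVec_mulVec' (a b v : Fin 3 → ℝ) :
    (vecMulVec a b) *ᵥ v = (b ⬝ᵥ v) • a := by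
  ext i
  simp only [Matrix.mulVec, vecMulVec_apply, dotProduct, Pi.smul_apply, smul_eq_mul,
    Finset.sum_mul]
  exact Finset.sum_congr rfl fun j _ => by ring

private lemma dot_self_nonneg (v : Fin 3 → ℝ) : 0 ≤ v ⬝ᵥ v :=
  Finset.sum_nonneg fun i _ => mul_self_nonneg (v i)

private lemma cs_key (a v : Fin 3 → ℝ) (hv : 0 < v ⬝ᵥ v) :
    0 ≤ (a ⬝ᵥ a) * (v ⬝ᵥ v) - (a ⬝ᵥ v) ^ 2 ∧
      ((a ⬝ᵥ a) * (v ⬝ᵥ v) - (a ⬝ᵥ v) ^ 2 = 0 → ∃ c : ℝ, a = c • v) := by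
  set c : ℝ := (a ⬝ᵥ v) / (v ⬝ᵥ v) with hc
  set w : Fin 3 → ℝ := a - c • v with hw
  have hvv0 : v ⬝ᵥ v ≠ 0 := hv.ne'
  have hwv : w ⬝ᵥ v = 0 := by
    rw [hw, sub_dotProduct, smul_dotProduct, smul_eq_mul, hc,
      div_mul_cancel₀ _ hvv0, sub_self]
  have hvw : v ⬝ᵥ w = 0 := by rw [dotProduct_comm]; exact hwv
  have ha : a = w + c • v := by simp [hw]
  have hav : a ⬝ᵥ v = c * (v ⬝ᵥ v) := by
    rw [ha, add_dotProduct, hwv, smul_dotProduct, smul_eq_mul, zero_add]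
  have haa : a ⬝ᵥ a = w ⬝ᵥ w + c ^ 2 * (v ⬝ᵥ v) := by
    conv_lhs => rw [ha]
    rw [add_dotProduct, dotProduct_add, dotProduct_add, dotProduct_smul,
      smul_dotProduct, dotProduct_smul, hwv, hvw]
    simp [smul_eq_mul]; ring
  have key : (a ⬝ᵥ a) * (v ⬝ᵥ v) - (a ⬝ᵥ v) ^ 2 = (w ⬝ᵥ w) * (v ⬝ᵥ v) := by
    rw [haa, hav]; ring
  constructor
  · rw [key]; exact mul_nonneg (dot_self_nonneg w) hv.le
  · intro h
    rw [key] at h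
    have hww : w ⬝ᵥ w = 0 := by
      rcases mul_eq_zero.1 h with h' | h'
      · exact h'
      · exact absurd h' hv.ne'
    have : w = 0 := dotProduct_self_eq_zero.1 hww
    exact ⟨c, by rw [ha, this, zero_add]⟩

theorem stmt4 (N : ℕ) (x : Fin N → Fin 3 → ℝ)
    (K : Matrix (Fin 3) (Fin 3) ℝ)
    (hK : K = (∑ n, x n ⬝ᵥ x n) • (1 : Matrix (Fin 3) (Fin 3) ℝ)
            - ∑ n, vecMulVec (x n) (x n))
    (hspan : 2 ≤ Module.finrank ℝ (Submodule.span ℝ (Set.range x))) :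
    (∀ v : Fin 3 → ℝ, v ≠ 0 → 0 < v ⬝ᵥ K.mulVec v) ∧ IsUnit K := by
  have hq : ∀ v : Fin 3 → ℝ,
      v ⬝ᵥ K.mulVec v = ∑ n, ((x n ⬝ᵥ x n) * (v ⬝ᵥ v) - (x n ⬝ᵥ v) ^ 2) := by
    intro v
    subst hK
    rw [sub_mulVec, dotProduct_sub, smul_mulVec, one_mulVec, dotProduct_smul]
    have hsum : (∑ n, vecMulVec (x n) (x n)) *ᵥ v = ∑ n, ((x n ⬝ᵥ v) • x n) := by
      ext i
      simp only [Matrix.mulVec, dotProduct, Matrix.sum_apply, Finset.sum_mul,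
        vecMulVec_apply, Finset.sum_apply, Pi.smul_apply, smul_eq_mul, Finset.mul_sum]
      rw [Finset.sum_comm]
      exact Finset.sum_congr rfl fun n _ => Finset.sum_congr rfl fun j _ => by ring
    have hdsum : v ⬝ᵥ (∑ n, ((x n ⬝ᵥ v) • x n)) = ∑ n, (x n ⬝ᵥ v) * (v ⬝ᵥ x n) := by
      simp only [dotProduct, Finset.sum_apply, Pi.smul_apply, smul_eq_mul, Finset.mul_sum]
      rw [Finset.sum_comm]
      refine Finset.sum_congr rfl fun n _ => ?_
      exact Finset.sum_congr rfl fun j _ => by ring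
    rw [hsum, hdsum, smul_eq_mul, Finset.sum_mul, ← Finset.sum_sub_distrib]
    refine Finset.sum_congr rfl fun n _ => ?_
    rw [dotProduct_comm v (x n)]
    ring
  have hpos : ∀ v : Fin 3 → ℝ, v ≠ 0 → 0 < v ⬝ᵥ K.mulVec v := by
    intro v hv
    have hvv : 0 < v ⬝ᵥ v :=
      lt_of_le_of_ne (dot_self_nonneg v) (fun h => hv (dotProduct_self_eq_zero.1 h.symm))
    rw [hq]
    -- there is some n with x n not a multiple of v
    have hex : ∃ n : Fin N, ∀ c : ℝ, x n ≠ c • v := by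
      by_contra h
      push_neg at h
      have hrange : Set.range x ⊆ (Submodule.span ℝ {v} : Submodule ℝ (Fin 3 → ℝ)) := by
        rintro _ ⟨n, rfl⟩
        obtain ⟨c, hc⟩ := h n
        rw [hc]
        exact Submodule.smul_mem _ c (Submodule.mem_span_singleton_self v)
      have hle : Submodule.span ℝ (Set.range x) ≤ Submodule.span ℝ {v} :=
        Submodule.span_le.2 hrange
      have h1 : Module.finrank ℝ (Submodule.span ℝ (Set.range x)) ≤
          Module.finrank ℝ (Submodule.span ℝ ({v} : Set (Fin 3 → ℝ))) :=
        Submodule.finrank_mono hle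
      rw [finrank_span_singleton hv] at h1
      omega
    obtain ⟨n, hn⟩ := hex
    refine Finset.sum_pos' (fun m _ => (cs_key (x m) v hvv).1) ⟨n, Finset.mem_univ n, ?_⟩
    rcases lt_or_eq_of_le (cs_key (x n) v hvv).1 with h | h
    · exact h
    · exfalso
      obtain ⟨c, hc⟩ := (cs_key (x n) v hvv).2 h.symm
      exact hn c hc
  refine ⟨hpos, ?_⟩
  rw [← Matrix.mulVec_injective_iff_isUnit]
  intro a b hab
  rw [← sub_eq_zero]
  by_contra h
  have hz : K *ᵥ (a - b) = 0 := by rw [Matrix.mulVec_sub, hab, sub_self]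
  have := hpos (a - b) h
  rw [hz, dotProduct_zero] at this
  exact lt_irrefl 0 this
end

section
/- Let x⁽¹⁾, …, x⁽ᴺ⁾ ∈ ℝ³ with K := Σₙ ‖x⁽ⁿ⁾‖² I − Σₙ x⁽ⁿ⁾(x⁽ⁿ⁾)ᵀ invertible. For v = (v⁽¹⁾,…,v⁽ᴺ⁾) ∈ (ℝ³)ᴺ, define the projection P(v)⁽ⁿ⁾ := v⁽ⁿ⁾ − (K⁻¹ (Σₘ x⁽ᵐ⁾ × v⁽ᵐ⁾)) × x⁽ⁿ⁾. Then the projected vector has zero total angular momentum: Σₙ x⁽ⁿ⁾ × P(v)⁽ⁿ⁾ = 0. -/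
open Matrix

lemma cross_triple (a w : Fin 3 → ℝ) :
    crossProduct a (crossProduct w a) = (a ⬝ᵥ a) • w - (a ⬝ᵥ w) • a := by
  ext i
  fin_cases i <;>
    simp [crossProduct, dotProduct, Fin.sum_univ_succ] <;> ring

theorem stmt6 (N : ℕ) (x : Fin N → Fin 3 → ℝ)
    (K : Matrix (Fin 3) (Fin 3) ℝ)
    (hK : K = (∑ n, x n ⬝ᵥ x n) • (1 : Matrix (Fin 3) (Fin 3) ℝ)
            - ∑ n, vecMulVec (x n) (x n))
    (hKinv : IsUnit K.det)
    (v : Fin N → Fin 3 → ℝ)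
    (P : Fin N → Fin 3 → ℝ)
    (hP : ∀ n, P n = v n
        - crossProduct (K⁻¹.mulVec (∑ m, crossProduct (x m) (v m))) (x n)) :
    ∑ n, crossProduct (x n) (P n) = 0 := by
  set L : Fin 3 → ℝ := ∑ m, crossProduct (x m) (v m) with hL
  set ω : Fin 3 → ℝ := K⁻¹.mulVec L with hω
  have hKw : ∀ w : Fin 3 → ℝ, K.mulVec w
      = ∑ n, crossProduct (x n) (crossProduct w (x n)) := by
    intro w
    have hsum : ∀ (M : Fin N → Matrix (Fin 3) (Fin 3) ℝ),
        (∑ n, M n) *ᵥ w = ∑ n, M n *ᵥ w := by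
      intro M
      ext i
      simp [Matrix.mulVec, dotProduct, Matrix.sum_apply, Finset.sum_mul]
      rw [Finset.sum_comm]
    have hvmv : ∀ a b : Fin 3 → ℝ, vecMulVec a b *ᵥ w = (b ⬝ᵥ w) • a := by
      intro a b
      ext i
      simp [Matrix.mulVec, dotProduct, vecMulVec_apply, Finset.sum_mul,
        mul_assoc]
      exact Finset.sum_congr rfl fun j _ => by ring
    simp only [cross_triple, hK, Matrix.sub_mulVec, Matrix.smul_mulVec,
      Matrix.one_mulVec, hsum, hvmv, Finset.sum_sub_distrib, Finset.sum_smul]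
  have hcross : ∀ n, crossProduct (x n) (P n)
      = crossProduct (x n) (v n) - crossProduct (x n) (crossProduct ω (x n)) := by
    intro n
    rw [hP n, map_sub]
  rw [Finset.sum_congr rfl fun n _ => hcross n, Finset.sum_sub_distrib, ← hL,
    ← hKw, hω, Matrix.mulVec_mulVec, Matrix.mul_nonsing_inv _ hKinv,
    Matrix.one_mulVec]
  exact sub_self _
end

section
/- With notation as above (K invertible, P(v)⁽ⁿ⁾ = v⁽ⁿ⁾ − (K⁻¹ Σₘ x⁽ᵐ⁾ × v⁽ᵐ⁾) × x⁽ⁿ⁾), the map P : (ℝ³)ᴺ → (ℝ³)ᴺ is linear and idempotent: P(P(v)) = P(v) for all v. -/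
/-!
`P` is the identity minus the map `v ↦ (K⁻¹ L v) × x`, where `L v = Σₘ x⁽ᵐ⁾ × v⁽ᵐ⁾` is the
angular momentum, so it is linear. The triple product expansion gives
`L (ω × x) = Σₙ x⁽ⁿ⁾ × (ω × x⁽ⁿ⁾) = K ω`, hence `L (P v) = L v - K K⁻¹ L v = 0`, and `P` fixes
every `w` with `L w = 0`, in particular `P v`.
-/

open Matrix

variable {R ι : Type*} [CommRing R] [Fintype ι]

def inertiaTensor (x : ι → Fin 3 → R) : Matrix (Fin 3) (Fin 3) R :=
  (∑ n, x n ⬝ᵥ x n) • 1 - ∑ n, vecMulVec (x n) (x n)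

def angularMomentum (x : ι → Fin 3 → R) : (ι → Fin 3 → R) →ₗ[R] Fin 3 → R :=
  ∑ m, crossProduct (x m) ∘ₗ LinearMap.proj m

lemma angularMomentum_apply (x v : ι → Fin 3 → R) :
    angularMomentum x v = ∑ m, x m ⨯₃ v m := by
  simp [angularMomentum]

lemma angularMomentum_cross (x : ι → Fin 3 → R) (ω : Fin 3 → R) :
    angularMomentum x (fun n ↦ ω ⨯₃ x n) = inertiaTensor x *ᵥ ω := by
  simp only [angularMomentum_apply, cross_cross_eq_smul_sub_smul', inertiaTensor, sub_mulVec,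
    smul_mulVec, one_mulVec, sum_mulVec, vecMulVec_mulVec, op_smul_eq_smul, Finset.sum_smul,
    Finset.sum_sub_distrib, dotProduct_comm ω]

def rigidProjection (A : Matrix (Fin 3) (Fin 3) R) (x : ι → Fin 3 → R) :
    (ι → Fin 3 → R) →ₗ[R] ι → Fin 3 → R :=
  LinearMap.id - LinearMap.pi fun n ↦ crossProduct.flip (x n) ∘ₗ A.mulVecLin ∘ₗ angularMomentum x

lemma rigidProjection_apply (A : Matrix (Fin 3) (Fin 3) R) (x v : ι → Fin 3 → R) (n : ι) :
    rigidProjection A x v n = v n - (A *ᵥ angularMomentum x v) ⨯₃ x n :=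
  rfl

lemma angularMomentum_rigidProjection {A : Matrix (Fin 3) (Fin 3) R} {x : ι → Fin 3 → R}
    (hA : inertiaTensor x * A = 1) (v : ι → Fin 3 → R) :
    angularMomentum x (rigidProjection A x v) = 0 := by
  have hcorr : rigidProjection A x v = v - fun n ↦ (A *ᵥ angularMomentum x v) ⨯₃ x n := rfl
  rw [hcorr, map_sub, angularMomentum_cross, mulVec_mulVec, hA, one_mulVec, sub_self]

lemma rigidProjection_rigidProjection {A : Matrix (Fin 3) (Fin 3) R} {x : ι → Fin 3 → R}
    (hA : inertiaTensor x * A = 1) (v : ι → Fin 3 → R) :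
    rigidProjection A x (rigidProjection A x v) = rigidProjection A x v := by
  ext n : 1
  rw [rigidProjection_apply _ _ (rigidProjection A x v), angularMomentum_rigidProjection hA,
    mulVec_zero, LinearMap.map_zero₂, sub_zero]

theorem stmt7 (N : ℕ) (x : Fin N → Fin 3 → ℝ)
    (K : Matrix (Fin 3) (Fin 3) ℝ)
    (hK : K = (∑ n, x n ⬝ᵥ x n) • (1 : Matrix (Fin 3) (Fin 3) ℝ)
            - ∑ n, vecMulVec (x n) (x n))
    (hKinv : IsUnit K.det)
    (P : (Fin N → Fin 3 → ℝ) → (Fin N → Fin 3 → ℝ))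
    (hP : ∀ v n, P v n = v n
        - crossProduct (K⁻¹.mulVec (∑ m, crossProduct (x m) (v m))) (x n)) :
    (∀ (c : ℝ) (v w : Fin N → Fin 3 → ℝ), P (c • v + w) = c • P v + P w) ∧
    (∀ v, P (P v) = P v) := by
  have hPK : P = rigidProjection K⁻¹ x := by
    ext v n : 2
    rw [hP, rigidProjection_apply, angularMomentum_apply]
  have hinv : inertiaTensor x * K⁻¹ = 1 := hK ▸ mul_nonsing_inv K hKinv
  subst hPK
  exact ⟨fun c v w ↦ by rw [map_add, map_smul], rigidProjection_rigidProjection hinv⟩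
end

section
/- With notation as above, for any v ∈ (ℝ³)ᴺ and any a ∈ ℝ³, the projected vector P(v) is orthogonal to the vertical vector (a × x⁽¹⁾, …, a × x⁽ᴺ⁾) with respect to the standard inner product on ℝ³ᴺ: Σₙ ⟨P(v)⁽ⁿ⁾, a × x⁽ⁿ⁾⟩ = 0. -/
open Matrix

lemma dpsum {N : ℕ} (f : Fin N → Fin 3 → ℝ) (a : Fin 3 → ℝ) :
    a ⬝ᵥ ∑ i, f i = ∑ i, a ⬝ᵥ f i := by
  simp [dotProduct, Finset.sum_apply, Finset.mul_sum]
  rw [Finset.sum_comm]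

lemma summv {N : ℕ} (M : Fin N → Matrix (Fin 3) (Fin 3) ℝ) (w : Fin 3 → ℝ) :
    (∑ i, M i) *ᵥ w = ∑ i, M i *ᵥ w := by
  ext j
  simp [mulVec, dotProduct, Finset.sum_apply, Finset.sum_mul, Matrix.sum_apply]
  rw [Finset.sum_comm]

lemma aux1 (w y b : Fin 3 → ℝ) :
    (crossProduct w y) ⬝ᵥ (crossProduct b y)
      = (y ⬝ᵥ y) * (b ⬝ᵥ w) - b ⬝ᵥ (vecMulVec y y).mulVec w := by
  simp [crossProduct, dotProduct, vecMulVec, mulVec, Fin.sum_univ_three]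
  ring

lemma aux2 (u b y : Fin 3 → ℝ) :
    u ⬝ᵥ (crossProduct b y) = b ⬝ᵥ (crossProduct y u) := by
  simp [crossProduct, dotProduct, Fin.sum_univ_three]
  ring

theorem stmt8 (N : ℕ) (x : Fin N → Fin 3 → ℝ)
    (K : Matrix (Fin 3) (Fin 3) ℝ)
    (hK : K = (∑ n, x n ⬝ᵥ x n) • (1 : Matrix (Fin 3) (Fin 3) ℝ)
            - ∑ n, vecMulVec (x n) (x n))
    (hKinv : IsUnit K.det)
    (v : Fin N → Fin 3 → ℝ)
    (P : Fin N → Fin 3 → ℝ)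
    (hP : ∀ n, P n = v n
        - crossProduct (K⁻¹.mulVec (∑ m, crossProduct (x m) (v m))) (x n))
    (a : Fin 3 → ℝ) :
    ∑ n, P n ⬝ᵥ crossProduct a (x n) = 0 := by
  set L : Fin 3 → ℝ := ∑ m, crossProduct (x m) (v m) with hL
  set w : Fin 3 → ℝ := K⁻¹.mulVec L with hw
  have hKw : K.mulVec w = L := by
    rw [hw, Matrix.mulVec_mulVec, Matrix.mul_nonsing_inv K hKinv, Matrix.one_mulVec]
  have h1 : ∑ n, P n ⬝ᵥ crossProduct a (x n)
      = (∑ n, v n ⬝ᵥ crossProduct a (x n))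
        - ∑ n, (crossProduct w (x n)) ⬝ᵥ crossProduct a (x n) := by
    rw [← Finset.sum_sub_distrib]
    congr 1; ext n
    rw [hP n, sub_dotProduct]
  rw [h1]
  have h2 : ∑ n, v n ⬝ᵥ crossProduct a (x n) = a ⬝ᵥ L := by
    rw [hL, dpsum]
    congr 1; ext n
    exact aux2 (v n) a (x n)
  have h3 : ∑ n, (crossProduct w (x n)) ⬝ᵥ crossProduct a (x n) = a ⬝ᵥ K.mulVec w := by
    rw [hK]
    have : ∀ n, (crossProduct w (x n)) ⬝ᵥ crossProduct a (x n)
        = (x n ⬝ᵥ x n) * (a ⬝ᵥ w) - a ⬝ᵥ (vecMulVec (x n) (x n)).mulVec w := fun n => aux1 w (x n) a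
    simp only [this, Matrix.sub_mulVec, dotProduct_sub, Matrix.smul_mulVec,
      Matrix.one_mulVec, dotProduct_smul, Finset.sum_sub_distrib, smul_eq_mul]
    congr 1
    · rw [← Finset.sum_mul]
    · rw [summv, dpsum]
  rw [h2, h3, hKw, sub_self]
end

section
/- With notation as above, P is the orthogonal projection onto the orthogonal complement of the vertical space V := {(a × x⁽ⁿ⁾)ₙ : a ∈ ℝ³} in ℝ³ᴺ; in particular, P is self-adjoint: Σₙ ⟨P(v)⁽ⁿ⁾, w⁽ⁿ⁾⟩ = Σₙ ⟨v⁽ⁿ⁾, P(w)⁽ⁿ⁾⟩ for all v, w ∈ (ℝ³)ᴺ. -/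
open Matrix

lemma cross_dot' (a y v : Fin 3 → ℝ) : v ⬝ᵥ (crossProduct a) y = a ⬝ᵥ (crossProduct y) v := by
  simp [crossProduct, dotProduct, Fin.sum_univ_three]; ring

lemma cross_dot_cross' (a b y : Fin 3 → ℝ) :
    ((crossProduct b) y) ⬝ᵥ ((crossProduct a) y) = (y ⬝ᵥ y) * (a ⬝ᵥ b) - (a ⬝ᵥ y) * (y ⬝ᵥ b) := by
  simp [crossProduct, dotProduct, Fin.sum_univ_three]; ring

lemma K_dot' (N : ℕ) (x : Fin N → Fin 3 → ℝ) (a b : Fin 3 → ℝ) :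
    a ⬝ᵥ ((((∑ n, x n ⬝ᵥ x n) • (1 : Matrix (Fin 3) (Fin 3) ℝ)
            - ∑ n, vecMulVec (x n) (x n))).mulVec b)
    = ∑ n, ((x n ⬝ᵥ x n) * (a ⬝ᵥ b) - (a ⬝ᵥ x n) * (x n ⬝ᵥ b)) := by
  simp only [Matrix.mulVec, dotProduct, Matrix.sub_apply, Matrix.smul_apply, Matrix.one_apply,
    Matrix.sum_apply, vecMulVec_apply, Fin.sum_univ_three, smul_eq_mul, mul_ite, mul_one, mul_zero,
    Fin.reduceEq, reduceIte, if_true, if_false, one_ne_zero, Nat.reduceEqDiff]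
  simp only [Finset.mul_sum, Finset.sum_mul, neg_eq_zero, sub_zero, zero_sub, zero_add, add_zero,
    ← Finset.sum_add_distrib, ← Finset.sum_sub_distrib, ← Finset.sum_neg_distrib]
  exact Finset.sum_congr rfl fun n _ => by ring

/-- `P` is the orthogonal projection onto the orthogonal complement of the
vertical space `V = {(a × xⁿ)ₙ : a ∈ ℝ³}`: `P v` is orthogonal to every
vertical vector, `v − P v` is vertical, and in particular `P` is self-adjoint. -/
theorem stmt9 (N : ℕ) (x : Fin N → Fin 3 → ℝ)
    (K : Matrix (Fin 3) (Fin 3) ℝ)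
    (hK : K = (∑ n, x n ⬝ᵥ x n) • (1 : Matrix (Fin 3) (Fin 3) ℝ)
            - ∑ n, vecMulVec (x n) (x n))
    (hKinv : IsUnit K.det)
    (P : (Fin N → Fin 3 → ℝ) → (Fin N → Fin 3 → ℝ))
    (hP : ∀ v n, P v n = v n
        - crossProduct (K⁻¹.mulVec (∑ m, crossProduct (x m) (v m))) (x n)) :
    (∀ v (a : Fin 3 → ℝ), ∑ n, P v n ⬝ᵥ crossProduct a (x n) = 0) ∧
    (∀ v, ∃ a : Fin 3 → ℝ, ∀ n, v n - P v n = crossProduct a (x n)) ∧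
    (∀ v w : Fin N → Fin 3 → ℝ, ∑ n, P v n ⬝ᵥ w n = ∑ n, v n ⬝ᵥ P w n) := by
  have hKK : ∀ s : Fin 3 → ℝ, K.mulVec (K⁻¹.mulVec s) = s := by
    intro s
    rw [Matrix.mulVec_mulVec, Matrix.mul_nonsing_inv K hKinv, Matrix.one_mulVec]
  have h1 : ∀ v (a : Fin 3 → ℝ), ∑ n, P v n ⬝ᵥ crossProduct a (x n) = 0 := by
    intro v a
    set s : Fin 3 → ℝ := ∑ m, crossProduct (x m) (v m) with hs
    set b : Fin 3 → ℝ := K⁻¹.mulVec s with hb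
    have : ∑ n, P v n ⬝ᵥ crossProduct a (x n)
        = (∑ n, v n ⬝ᵥ crossProduct a (x n)) - ∑ n, (crossProduct b (x n)) ⬝ᵥ crossProduct a (x n) := by
      rw [← Finset.sum_sub_distrib]
      refine Finset.sum_congr rfl fun n _ => ?_
      rw [hP v n, sub_dotProduct]
    rw [this]
    have hA : ∑ n, v n ⬝ᵥ crossProduct a (x n) = a ⬝ᵥ s := by
      rw [hs]
      rw [show (a ⬝ᵥ ∑ m, (crossProduct (x m)) (v m)) = ∑ m, a ⬝ᵥ (crossProduct (x m)) (v m) by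
        simp [dotProduct, Finset.mul_sum, Finset.sum_apply]; rw [Finset.sum_comm]]
      exact Finset.sum_congr rfl fun n _ => cross_dot' a (x n) (v n)
    have hB : ∑ n, (crossProduct b (x n)) ⬝ᵥ crossProduct a (x n) = a ⬝ᵥ s := by
      calc ∑ n, (crossProduct b (x n)) ⬝ᵥ crossProduct a (x n)
          = ∑ n, ((x n ⬝ᵥ x n) * (a ⬝ᵥ b) - (a ⬝ᵥ x n) * (x n ⬝ᵥ b)) :=
            Finset.sum_congr rfl fun n _ => cross_dot_cross' a b (x n)
        _ = a ⬝ᵥ K.mulVec b := by rw [hK]; exact (K_dot' N x a b).symm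
        _ = a ⬝ᵥ s := by rw [hb, hKK]
    rw [hA, hB, sub_self]
  refine ⟨h1, fun v => ⟨K⁻¹.mulVec (∑ m, crossProduct (x m) (v m)), fun n => by
    rw [hP v n]; ring⟩, ?_⟩
  intro v w
  have hvert : ∀ u : Fin N → Fin 3 → ℝ, ∃ a : Fin 3 → ℝ,
      ∀ n, u n = P u n + crossProduct a (x n) := by
    intro u
    exact ⟨K⁻¹.mulVec (∑ m, crossProduct (x m) (u m)), fun n => by rw [hP u n]; ring⟩
  obtain ⟨aw, haw⟩ := hvert w
  obtain ⟨av, hav⟩ := hvert v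
  calc ∑ n, P v n ⬝ᵥ w n
      = ∑ n, (P v n ⬝ᵥ P w n + P v n ⬝ᵥ crossProduct aw (x n)) := by
        refine Finset.sum_congr rfl fun n _ => ?_
        rw [haw n, dotProduct_add]
    _ = ∑ n, P v n ⬝ᵥ P w n := by
        rw [Finset.sum_add_distrib, h1 v aw, add_zero]
    _ = ∑ n, (P w n ⬝ᵥ P v n + P w n ⬝ᵥ crossProduct av (x n)) := by
        rw [Finset.sum_add_distrib, h1 w av, add_zero]
        exact Finset.sum_congr rfl fun n _ => dotProduct_comm _ _
    _ = ∑ n, v n ⬝ᵥ P w n := by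
        refine Finset.sum_congr rfl fun n _ => ?_
        rw [hav n, add_dotProduct, dotProduct_comm, dotProduct_comm (crossProduct av (x n))]
end

section
/- Equivariance of the conditional expectation (finite/discrete version): let G be a finite group acting linearly on ℝᵈ, let p₁ be a G-invariant probability mass function on a finite G-invariant set S ⊂ ℝᵈ, and let q(y | x) be a G-equivariant transition kernel, i.e., q(g y | g x) = q(y | x) for all g ∈ G. Define D(y) := (Σ_{x∈S} x · p₁(x) q(y|x)) / (Σ_{x∈S} p₁(x) q(y|x)) whenever the denominator is positive. Then D is G-equivariant: D(g y) = g D(y) for all g ∈ G. -/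
/-- Equivariance of the optimal denoiser (conditional expectation), in the
finite/discrete setting. -/
theorem stmt17 {G : Type*} [Group G] [Fintype G] (d : ℕ)
    (ρ : G →* ((Fin d → ℝ) ≃ₗ[ℝ] (Fin d → ℝ)))
    (S : Finset (Fin d → ℝ))
    (hS : ∀ (g : G) (x : Fin d → ℝ), x ∈ S → ρ g x ∈ S)
    (p₁ : (Fin d → ℝ) → ℝ)
    (hp₁nonneg : ∀ x, 0 ≤ p₁ x) (hp₁sum : ∑ x ∈ S, p₁ x = 1)
    (hp₁inv : ∀ (g : G) (x : Fin d → ℝ), p₁ (ρ g x) = p₁ x)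
    (q : (Fin d → ℝ) → (Fin d → ℝ) → ℝ)
    (hqnonneg : ∀ y x, 0 ≤ q y x)
    (hqequiv : ∀ (g : G) (y x : Fin d → ℝ), q (ρ g y) (ρ g x) = q y x)
    (D : (Fin d → ℝ) → (Fin d → ℝ))
    (hD : ∀ y, D y = (∑ x ∈ S, p₁ x * q y x)⁻¹ • ∑ x ∈ S, (p₁ x * q y x) • x)
    (g : G) (y : Fin d → ℝ)
    (hpos : 0 < ∑ x ∈ S, p₁ x * q y x) :
    D (ρ g y) = ρ g (D y) := by
  have hinv : ∀ x : Fin d → ℝ, ρ g⁻¹ (ρ g x) = x := by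
    intro x
    rw [show ρ g⁻¹ (ρ g x) = ρ (g⁻¹ * g) x from by rw [map_mul]; rfl,
      inv_mul_cancel, map_one]
    rfl
  have hmem : ∀ x : Fin d → ℝ, x ∈ S ↔ ρ g x ∈ S := by
    intro x
    constructor
    · exact hS g x
    · intro h
      have := hS g⁻¹ _ h
      rwa [hinv] at this
  have hden : ∑ x ∈ S, p₁ x * q (ρ g y) x = ∑ x ∈ S, p₁ x * q y x := by
    refine (Finset.sum_equiv (ρ g).toEquiv hmem ?_).symm
    intro x hx
    rw [show (ρ g).toEquiv x = ρ g x from rfl, hp₁inv, hqequiv]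
  have hnum : ∑ x ∈ S, (p₁ x * q (ρ g y) x) • x
      = ρ g (∑ x ∈ S, (p₁ x * q y x) • x) := by
    rw [map_sum]
    refine (Finset.sum_equiv (ρ g).toEquiv hmem ?_).symm
    intro x hx
    rw [show (ρ g).toEquiv x = ρ g x from rfl, map_smul, hp₁inv, hqequiv]
  rw [hD, hD, hden, hnum, map_smul]
end
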